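/- Let L be a complete discrete valuation field of characteristic p > 0 with residue field l, and let a in L with v_L(a) < 0. The element a is 'best' (i.e., no a' with v_L(a') > v_L(a) satisfies a = a' + b^p - b for some b in L) if and only if either p does not divide v_L(a), or p divides v_L(a) but the residue class of a / pi_L^{v_L(a)} does not lie in l^p. -/

import Mathlib

/-! If `v b < 0` then `b ^ n - b` has valuation `n * v b`, and if `v b ≥ 0` it is integral.
Hence adding an Artin–Schreier term can raise the valuation of `a` only by cancelling the
leading term of `a` against `b ^ p` with `p * v b = v a`: this needs `p ∣ v a` and a unit `u`
with `u ^ p ≡ a π^{-v a}` modulo the maximal ideal, and conversely `b = u π^{v a / p}` works. -/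

namespace AddValuation

variable {K : Type*} [Field K] (v : AddValuation K (WithTop ℤ)) {π : K}

theorem map_zpow_of_eq_one (hπ : v π = 1) (k : ℤ) : v (π ^ k) = k := by
  cases k with
  | ofNat n => simp [map_pow, hπ]
  | negSucc n =>
    rw [zpow_negSucc, map_inv, map_pow, hπ, nsmul_one, Int.negSucc_eq]
    norm_cast

theorem map_mul_zpow_of_eq_one (hπ : v π = 1) (x : K) (k : ℤ) :
    v (x * π ^ k) = v x + k := by
  rw [map_mul, map_zpow_of_eq_one v hπ]

theorem coe_lt_iff_pos_map_mul_zpow_neg (hπ : v π = 1) (x : K) (k : ℤ) :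
    (k : WithTop ℤ) < v x ↔ 0 < v (x * π ^ (-k)) := by
  rw [map_mul_zpow_of_eq_one v hπ, ← WithTop.add_lt_add_iff_right (WithTop.coe_ne_top (a := -k)),
    ← WithTop.coe_add, add_neg_cancel, WithTop.coe_zero]

theorem map_neg_of_map_pow_sub_self_neg {n : ℕ} {b : K} (h : v (b ^ n - b) < 0) : v b < 0 := by
  contrapose! h
  exact v.map_le_sub (by rw [map_pow]; exact nsmul_nonneg h n) h

theorem map_pow_sub_self_of_map_eq_neg {n : ℕ} (hn : 1 < n) {b : K} {c : ℤ} (hb : v b = c)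
    (hc : c < 0) : v (b ^ n - b) = (n * c : ℤ) := by
  have hpow : v (b ^ n) = (n * c : ℤ) := by
    rw [map_pow, hb, ← WithTop.coe_nsmul, nsmul_eq_mul]
  rw [map_sub_eq_of_lt_left v (by rw [hpow, hb, WithTop.coe_lt_coe]; nlinarith), hpow]

variable {n : ℕ} {a : K} {k : ℤ}

theorem dvd_and_exists_of_eq_add_pow_sub_self (hn : 1 < n) (hπ : v π = 1) (ha : v a = k)
    (hk : k < 0) {a' b : K} (heq : a = a' + (b ^ n - b)) (hlt : v a < v a') :
    (n : ℤ) ∣ k ∧ ∃ u : K, 0 ≤ v u ∧ 0 < v (a * π ^ (-k) - u ^ n) := by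
  have hsub : v (b ^ n - b) = k := by
    rw [show b ^ n - b = a - a' by rw [heq]; ring, map_sub_eq_of_lt_left v hlt, ha]
  have hb : v b < 0 := v.map_neg_of_map_pow_sub_self_neg (by rw [hsub]; exact_mod_cast hk)
  obtain ⟨c, hc⟩ := WithTop.ne_top_iff_exists.mp hb.ne_top
  have hc0 : c < 0 := by rw [← hc] at hb; exact_mod_cast hb
  have hkc : k = n * c := by
    have := v.map_pow_sub_self_of_map_eq_neg hn hc.symm hc0
    rw [hsub] at this; exact_mod_cast this
  refine ⟨⟨c, hkc⟩, b * π ^ (-c), ?_, ?_⟩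
  · rw [map_mul_zpow_of_eq_one v hπ, ← hc, ← WithTop.coe_add, add_neg_cancel, WithTop.coe_zero]
  · have hshift : a * π ^ (-k) - (b * π ^ (-c)) ^ n = (a' - b) * π ^ (-k) := by
      rw [mul_pow, ← zpow_natCast (π ^ (-c)), ← zpow_mul, neg_mul, mul_comm c, ← hkc, heq]
      ring
    rw [hshift, ← coe_lt_iff_pos_map_mul_zpow_neg v hπ]
    refine lt_of_lt_of_le (lt_min (ha ▸ hlt) ?_) (v.map_sub a' b)
    rw [← hc, WithTop.coe_lt_coe]; nlinarith

theorem exists_eq_add_pow_sub_self_of_dvd (hn : 1 < n) (hπ : v π = 1) {m : ℤ}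
    (ha : v a = (n * m : ℤ)) (hm : m < 0) {u : K} (hu : 0 ≤ v u)
    (hau : 0 < v (a * π ^ (-(n * m)) - u ^ n)) :
    ∃ a' b : K, a = a' + (b ^ n - b) ∧ v a < v a' := by
  refine ⟨a - ((u * π ^ m) ^ n - u * π ^ m), u * π ^ m, by ring, ?_⟩
  have hshift : (a - ((u * π ^ m) ^ n - u * π ^ m)) * π ^ (-(n * m)) =
      (a * π ^ (-(n * m)) - u ^ n) + u * π ^ (m - n * m) := by
    have hπ0 : π ≠ 0 := by rintro rfl; simp at hπ
    have hpow : (π ^ m) ^ n * π ^ (-(n * m)) = 1 := by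
      rw [← zpow_natCast, ← zpow_mul, ← zpow_add₀ hπ0, mul_comm m, add_neg_cancel, zpow_zero]
    rw [sub_eq_add_neg m, zpow_add₀ hπ0]
    linear_combination (-u ^ n) * hpow
  rw [ha, coe_lt_iff_pos_map_mul_zpow_neg v hπ, hshift]
  refine v.map_lt_add hau ?_
  rw [map_mul_zpow_of_eq_one v hπ]
  have hpos : (0 : WithTop ℤ) < ((m - n * m : ℤ) : WithTop ℤ) := by
    rw [← WithTop.coe_zero, WithTop.coe_lt_coe]; nlinarith
  simpa using WithTop.add_lt_add_of_le_of_lt WithTop.zero_ne_top hu hpos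

end AddValuation

theorem stmt2_general (p : ℕ) [Fact p.Prime] (L : Type) [Field L]
    -- `vL` is the normalized discrete valuation of the CDVF `L`, `π` a uniformizer
    (vL : AddValuation L (WithTop ℤ)) (π : L) (hπ : vL π = 1)
    (a : L) (va : ℤ) (hva : vL a = va) (hneg : va < 0) :
    -- `a` is best, i.e. cannot be modified by an Artin-Schreier term to increase
    -- its valuation, ...
    (¬ ∃ a' b : L, a = a' + (b ^ p - b) ∧ vL a < vL a') ↔
    -- ... iff either `p ∤ v_L(a)`, or `p ∣ v_L(a)` but the residue class of
    -- `a / π^{v_L(a)}` does not lie in `l^p`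
      (¬ (p : ℤ) ∣ va) ∨
        ((p : ℤ) ∣ va ∧ ¬ ∃ u : L, 0 ≤ vL u ∧ 0 < vL (a * π ^ (-va) - u ^ p)) := by
  have hp : 1 < p := (Fact.out : p.Prime).one_lt
  constructor
  · intro hbest
    by_cases hdvd : (p : ℤ) ∣ va
    · obtain ⟨m, rfl⟩ := hdvd
      refine Or.inr ⟨dvd_mul_right _ _, fun ⟨u, hu, hau⟩ => hbest ?_⟩
      exact vL.exists_eq_add_pow_sub_self_of_dvd hp hπ hva
        (neg_of_mul_neg_right hneg (Int.natCast_nonneg p)) hu hau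
    · exact Or.inl hdvd
  · rintro hcond ⟨a', b, heq, hlt⟩
    obtain ⟨hdvd, hraise⟩ := vL.dvd_and_exists_of_eq_add_pow_sub_self hp hπ hva hneg heq hlt
    rcases hcond with hndvd | ⟨-, hnraise⟩
    exacts [hndvd hdvd, hnraise hraise]

theorem stmt2 (p : ℕ) [Fact p.Prime] (L : Type) [Field L] [CharP L p]
    -- `vL` is the normalized discrete valuation of the CDVF `L`, `π` a uniformizer
    (vL : AddValuation L (WithTop ℤ)) (π : L) (hπ : vL π = 1)
    (a : L) (va : ℤ) (hva : vL a = va) (hneg : va < 0) :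
    -- `a` is best, i.e. cannot be modified by an Artin-Schreier term to increase
    -- its valuation, ...
    (¬ ∃ a' b : L, a = a' + (b ^ p - b) ∧ vL a < vL a') ↔
    -- ... iff either `p ∤ v_L(a)`, or `p ∣ v_L(a)` but the residue class of
    -- `a / π^{v_L(a)}` does not lie in `l^p`
      (¬ (p : ℤ) ∣ va) ∨
        ((p : ℤ) ∣ va ∧ ¬ ∃ u : L, 0 ≤ vL u ∧ 0 < vL (a * π ^ (-va) - u ^ p)) :=
  stmt2_general p L vL π hπ a va hva hneg
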